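/- arXiv:2201.13094 — 2 statements merged into one kernel-verified Lean document; each statement's English description precedes it below -/
import Mathlib

section
/- Let (Y, d) be a metric space, N ∈ ℕ, and define η(w, (y₁,…,y_N)) to be any minimizer over y ∈ Y of S(y,w) := Σₙ wₙ d(y, yₙ)^p for w ∈ Δ_N and p ≥ 1 (assuming a minimizer exists). Then d(η(w, y_•), yᵢ) ≤ 2(Σⱼ wⱼ d(yᵢ, yⱼ)^p)^{1/p} for every i. -/
open Finset

/-- Barycenter mixing-function estimate: if `b` minimizes `y ↦ Σₙ wₙ d(y, yₙ)^p` over a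
metric space `Y` (with simplex weights `w` and `p ≥ 1`), then
`d(b, yᵢ) ≤ 2 (Σⱼ wⱼ d(yᵢ, yⱼ)^p)^{1/p}` for every `i`. -/
theorem barycenter_mixing_estimate
    {Y : Type*} [MetricSpace Y] (N : ℕ) (p : ℝ) (hp : 1 ≤ p)
    (w : Fin N → ℝ) (hw0 : ∀ j, 0 ≤ w j) (hw1 : ∑ j, w j = 1)
    (y : Fin N → Y) (b : Y)
    (hb : ∀ z : Y, ∑ n, w n * dist b (y n) ^ p ≤ ∑ n, w n * dist z (y n) ^ p)
    (i : Fin N) :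
    dist b (y i) ≤ 2 * (∑ j, w j * dist (y i) (y j) ^ p) ^ (1 / p) := by
  have hp0 : 0 < p := lt_of_lt_of_le one_pos hp
  set A : ℝ := (∑ j, w j * dist (y i) (y j) ^ p) ^ (1 / p) with hA
  have hw0' : ∀ j ∈ Finset.univ, (0:ℝ) ≤ w j := fun j _ => hw0 j
  have h1 : ∑ j, w j * dist b (y j) ≤ A := by
    calc ∑ j, w j * dist b (y j)
        ≤ (∑ j, w j * dist b (y j) ^ p) ^ (1 / p) :=
          Real.arith_mean_le_rpow_mean _ _ _ hw0' hw1
            (fun j _ => dist_nonneg) hp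
      _ ≤ A := by
          apply Real.rpow_le_rpow _ (hb (y i)) (one_div_pos.mpr hp0).le
          exact Finset.sum_nonneg fun j _ => mul_nonneg (hw0 j) (Real.rpow_nonneg dist_nonneg p)
  have h2 : ∑ j, w j * dist (y j) (y i) ≤ A := by
    calc ∑ j, w j * dist (y j) (y i)
        ≤ (∑ j, w j * dist (y j) (y i) ^ p) ^ (1 / p) :=
          Real.arith_mean_le_rpow_mean _ _ _ hw0' hw1
            (fun j _ => dist_nonneg) hp
      _ = A := by simp_rw [hA, dist_comm (y i)]
  calc dist b (y i) = ∑ j, w j * dist b (y i) := by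
        rw [← Finset.sum_mul, hw1, one_mul]
    _ ≤ ∑ j, w j * (dist b (y j) + dist (y j) (y i)) :=
        Finset.sum_le_sum fun j _ =>
          mul_le_mul_of_nonneg_left (dist_triangle _ _ _) (hw0 j)
    _ = (∑ j, w j * dist b (y j)) + ∑ j, w j * dist (y j) (y i) := by
        simp_rw [mul_add, Finset.sum_add_distrib]
    _ ≤ A + A := add_le_add h1 h2
    _ = 2 * A := by ring
end

section
/- Let (t_n)_{n∈ℤ} be a time grid with increments bounded by δ₊, p > 1, α < 1 − p (so α/(p−1) < −1), C > 0, and let 𝒦 = K^α_{C,p} := { x ∈ (ℝᵈ)^ℤ : x_{t₀} ∈ K and Σ_{n∈ℤ} ‖Δ_n x‖^p / (|Δt_n|·|n|₊₊^α) ≤ C }, where |n|₊₊ := max{1, |n|}. Then for every x ∈ 𝒦 and integers n < n': ‖x_{t_n} − x_{t_{n'}}‖ ≤ C^{1/p} δ₊^{1/p} (Σ_{k∈ℤ} |k|₊₊^{α/(p−1)})^{(p−1)/p}, and the series Σ_{k∈ℤ} |k|₊₊^{α/(p−1)} converges to 1 + 2ζ(−α/(p−1)) since α/(p−1) < −1.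 -/
open Finset


/-- Paths with summable weighted `p`-variation are uniformly bounded in increments:
if `x ∈ K^α_{C,p}` (i.e. `x_{t₀} ∈ K` and
`Σ_{n∈ℤ} ‖Δ_n x‖^p/(|Δt_n|·|n|₊₊^α) ≤ C`) with `p > 1`, `α < 1 − p`, on a time grid
with increments in `(0, δ₊]`, then for all `n < n'`,
`‖x_{t_n} − x_{t_{n'}}‖ ≤ C^{1/p} δ₊^{1/p} (Σ_{k∈ℤ}|k|₊₊^{α/(p−1)})^{(p−1)/p}`,
and the series `Σ_{k∈ℤ}|k|₊₊^{α/(p−1)}` converges to `1 + 2ζ(−α/(p−1))`,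
i.e. to `1 + 2 Σ_{m≥1} m^{α/(p−1)}`. -/
theorem weighted_p_variation_path_increment_bound
    (d : ℕ) (K : Set (EuclideanSpace ℝ (Fin d))) (hK : IsCompact K)
    (t : ℤ → ℝ) (δp : ℝ)
    (hstep : ∀ k : ℤ, 0 < t (k + 1) - t k ∧ t (k + 1) - t k ≤ δp)
    (C p α : ℝ) (hC : 0 < C) (hp : 1 < p) (hα : α < 1 - p)
    (x : ℤ → EuclideanSpace ℝ (Fin d))
    (hx0 : x 0 ∈ K)
    (hsummable : Summable (fun n : ℤ =>
      ‖x n - x (n - 1)‖ ^ p / ((t (n + 1) - t n) * max 1 |(n : ℝ)| ^ α)))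
    (hvar : (∑' n : ℤ,
      ‖x n - x (n - 1)‖ ^ p / ((t (n + 1) - t n) * max 1 |(n : ℝ)| ^ α)) ≤ C) :
    (∀ n n' : ℤ, n < n' →
      ‖x n - x n'‖ ≤ C ^ (1 / p) * δp ^ (1 / p) *
        (∑' k : ℤ, max 1 |(k : ℝ)| ^ (α / (p - 1))) ^ ((p - 1) / p)) ∧
    Summable (fun k : ℤ => max 1 |(k : ℝ)| ^ (α / (p - 1))) ∧
    (∑' k : ℤ, max 1 |(k : ℝ)| ^ (α / (p - 1))) =
      1 + 2 * ∑' m : ℕ, ((m : ℝ) + 1) ^ (α / (p - 1)) := by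
  have hp0 : (0 : ℝ) < p := by linarith
  have hp1 : (0 : ℝ) < p - 1 := by linarith
  set q : ℝ := α / (p - 1) with hqdef
  have hq1 : q < -1 := by
    rw [hqdef, div_lt_iff₀ hp1]; linarith
  set f : ℤ → ℝ := fun k => max 1 |(k : ℝ)| ^ q with hf
  have hm1 : ∀ k : ℤ, (0:ℝ) < max 1 |(k : ℝ)| := fun k =>
    lt_of_lt_of_le one_pos (le_max_left _ _)
  have hfpos : ∀ k, 0 < f k := fun k => Real.rpow_pos_of_pos (hm1 k) _
  -- summability over ℕ
  have hneg : ∀ k : ℤ, f (-k) = f k := by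
    intro k
    simp only [hf, Int.cast_neg, abs_neg]
  have hnat : ∀ n : ℕ, f ((n : ℤ) + 1) = ((n : ℝ) + 1) ^ q := by
    intro n
    simp only [hf]
    push_cast
    rw [abs_of_nonneg (by positivity),
      max_eq_right (by linarith [Nat.cast_nonneg (α := ℝ) n])]
  have hsumshift : Summable (fun n : ℕ => ((n : ℝ) + 1) ^ q) := by
    have h := Real.summable_nat_rpow.2 hq1
    have := (summable_nat_add_iff (f := fun n : ℕ => (n : ℝ) ^ q) 1).2 h
    refine this.congr fun n => ?_
    push_cast; ring_nf
  have hsum1 : Summable (fun n : ℕ => f (n : ℤ)) := by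
    rw [← summable_nat_add_iff 1]
    refine hsumshift.congr fun n => ?_
    rw [← hnat n]; norm_cast
  have hsum2 : Summable (fun n : ℕ => f (-((n : ℤ) + 1))) := by
    refine hsumshift.congr fun n => ?_
    rw [hneg, hnat n]
  have hsumint : Summable f := Summable.of_nat_of_neg_add_one hsum1 hsum2
  have htsum : (∑' k : ℤ, f k) = 1 + 2 * ∑' m : ℕ, ((m : ℝ) + 1) ^ q := by
    rw [tsum_of_nat_of_neg_add_one hsum1 hsum2]
    have h1 : (∑' n : ℕ, f (n : ℤ)) = 1 + ∑' m : ℕ, ((m : ℝ) + 1) ^ q := by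
      rw [Summable.tsum_eq_zero_add hsum1]
      congr 1
      · simp [hf]
      · exact tsum_congr fun n => by rw [← hnat n]; norm_cast
    have h2 : (∑' n : ℕ, f (-((n : ℤ) + 1))) = ∑' m : ℕ, ((m : ℝ) + 1) ^ q := by
      refine tsum_congr fun n => ?_
      rw [hneg, hnat n]
    rw [h1, h2]; ring
  set S : ℝ := ∑' k : ℤ, f k with hS
  have hSpos : 0 ≤ S := tsum_nonneg fun k => (hfpos k).le
  have hδp : 0 < δp := lt_of_lt_of_le (hstep 0).1 (hstep 0).2
  refine ⟨?_, hsumint, htsum⟩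
  intro n n' hnn'
  -- weights
  set w : ℤ → ℝ := fun k => (t (k + 1) - t k) * max 1 |(k : ℝ)| ^ α with hw
  have hwpos : ∀ k, 0 < w k := fun k =>
    mul_pos (hstep k).1 (Real.rpow_pos_of_pos (hm1 k) _)
  -- telescoping
  have htel : ∀ m : ℤ, n ≤ m → x m - x n = ∑ k ∈ Finset.Ioc n m, (x k - x (k - 1)) := by
    refine Int.le_induction ?_ ?_
    · simp
    · intro m hm ih
      have hins : Finset.Ioc n (m + 1) = insert (m + 1) (Finset.Ioc n m) := by
        ext k; simp only [Finset.mem_Ioc, Finset.mem_insert]; omega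
      rw [hins, Finset.sum_insert (by simp), ← ih]
      simp only [add_sub_cancel_right]
      abel
  have hbound : ‖x n - x n'‖ ≤ ∑ k ∈ Finset.Ioc n n', ‖x k - x (k - 1)‖ := by
    rw [norm_sub_rev, htel n' hnn'.le]
    exact norm_sum_le _ _
  set s := Finset.Ioc n n' with hs
  set pq : ℝ := p / (p - 1) with hpq
  have hconj : p.HolderConjugate pq := Real.HolderConjugate.conjExponent hp
  -- Hölder
  set a : ℤ → ℝ := fun k => ‖x k - x (k - 1)‖ / (w k) ^ (1 / p) with ha
  set b : ℤ → ℝ := fun k => (w k) ^ (1 / p) with hb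
  have hab : ∀ k, ‖x k - x (k - 1)‖ = a k * b k := by
    intro k
    rw [ha, hb]
    simp only
    rw [div_mul_cancel₀]
    exact (Real.rpow_pos_of_pos (hwpos k) _).ne'
  have holder := Real.inner_le_Lp_mul_Lq s a b hconj
  -- sum of |a|^p
  have hap : ∀ k, |a k| ^ p = ‖x k - x (k - 1)‖ ^ p / w k := by
    intro k
    have hwk := (hwpos k).le
    rw [ha]
    simp only
    rw [abs_div, abs_of_nonneg (norm_nonneg _),
      abs_of_nonneg (Real.rpow_nonneg hwk _),
      Real.div_rpow (norm_nonneg _) (Real.rpow_nonneg hwk _),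
      ← Real.rpow_mul hwk, one_div_mul_cancel hp0.ne', Real.rpow_one]
  have hA : (∑ k ∈ s, |a k| ^ p) ≤ C := by
    calc (∑ k ∈ s, |a k| ^ p) = ∑ k ∈ s, ‖x k - x (k - 1)‖ ^ p / w k := by
          exact Finset.sum_congr rfl fun k _ => hap k
      _ ≤ ∑' k : ℤ, ‖x k - x (k - 1)‖ ^ p / w k := by
          refine Summable.sum_le_tsum s (fun k _ => ?_) hsummable
          exact div_nonneg (Real.rpow_nonneg (norm_nonneg _) _) (hwpos k).le
      _ ≤ C := hvar
  -- sum of |b|^pq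
  have hbq : ∀ k, |b k| ^ pq ≤ δp ^ (1 / (p - 1)) * f k := by
    intro k
    have hwk := (hwpos k).le
    rw [hb]
    simp only
    rw [abs_of_nonneg (Real.rpow_nonneg hwk _), ← Real.rpow_mul hwk]
    have hexp : 1 / p * pq = 1 / (p - 1) := by
      rw [hpq]; field_simp
    rw [hexp]
    have hle : w k ≤ δp * max 1 |(k : ℝ)| ^ α := by
      rw [hw]
      exact mul_le_mul_of_nonneg_right (hstep k).2 (Real.rpow_nonneg (hm1 k).le _)
    calc (w k) ^ (1 / (p - 1)) ≤ (δp * max 1 |(k : ℝ)| ^ α) ^ (1 / (p - 1)) :=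
          Real.rpow_le_rpow hwk hle (by positivity)
      _ = δp ^ (1 / (p - 1)) * f k := by
          rw [Real.mul_rpow hδp.le (Real.rpow_nonneg (hm1 k).le _),
            ← Real.rpow_mul (hm1 k).le]
          congr 2
          rw [hqdef]; field_simp
  have hB : (∑ k ∈ s, |b k| ^ pq) ≤ δp ^ (1 / (p - 1)) * S := by
    calc (∑ k ∈ s, |b k| ^ pq) ≤ ∑ k ∈ s, δp ^ (1 / (p - 1)) * f k :=
          Finset.sum_le_sum fun k _ => hbq k
      _ = δp ^ (1 / (p - 1)) * ∑ k ∈ s, f k := by rw [← Finset.mul_sum]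
      _ ≤ δp ^ (1 / (p - 1)) * S := by
          refine mul_le_mul_of_nonneg_left ?_ (by positivity)
          exact Summable.sum_le_tsum s (fun k _ => (hfpos k).le) hsumint
  -- combine
  have h1pq : 1 / pq = (p - 1) / p := by rw [hpq]; field_simp
  have key : (∑ k ∈ s, a k * b k) ≤ C ^ (1 / p) * (δp ^ (1 / (p - 1)) * S) ^ ((p - 1) / p) := by
    refine holder.trans ?_
    rw [h1pq]
    refine mul_le_mul ?_ ?_ (Real.rpow_nonneg ?_ _) (by positivity)
    · exact Real.rpow_le_rpow (Finset.sum_nonneg fun k _ => by positivity) hA (by positivity)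
    · exact Real.rpow_le_rpow (Finset.sum_nonneg fun k _ => by positivity) hB (by positivity)
    · exact Finset.sum_nonneg fun k _ => by positivity
  have hfinal : (δp ^ (1 / (p - 1)) * S) ^ ((p - 1) / p) = δp ^ (1 / p) * S ^ ((p - 1) / p) := by
    rw [Real.mul_rpow (by positivity) hSpos, ← Real.rpow_mul hδp.le]
    congr 2
    field_simp
  calc ‖x n - x n'‖ ≤ ∑ k ∈ s, ‖x k - x (k - 1)‖ := hbound
    _ = ∑ k ∈ s, a k * b k := Finset.sum_congr rfl fun k _ => hab k
    _ ≤ C ^ (1 / p) * (δp ^ (1 / (p - 1)) * S) ^ ((p - 1) / p) := key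
    _ = C ^ (1 / p) * δp ^ (1 / p) * S ^ ((p - 1) / p) := by rw [hfinal, mul_assoc]
end
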